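/- Let 𝔤 be a real Lie algebra with an anti-bi-invariant almost complex structure J (J² = −Id and [JX,Y] = −J[X,Y]). In the complexification, with 𝔤^{1,0} and 𝔤^{0,1} the ±i eigenspaces of J, the following hold: [𝔤^{1,0}, 𝔤^{1,0}] ⊆ 𝔤^{0,1}, [𝔤^{0,1}, 𝔤^{0,1}] ⊆ 𝔤^{1,0}, and [𝔤^{1,0}, 𝔤^{0,1}] = 0. -/

import Mathlib

/-!
Anti-bi-invariance on one side gives it on the other by skew-symmetry, `⁅x, J y⁆ = -J ⁅x, y⁆`,
and together with `J² = -1` this yields `⁅J x, J y⁆ = -⁅x, y⁆`. Expanding the complex bracket of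
`x ∓ iJx` and `y ∓ iJy` with these rules, it equals `2(⁅x, y⁆ ± iJ⁅x, y⁆)`, which lies in the
opposite eigenspace, while the bracket of `x - iJx` with `y + iJy` cancels term by term.
-/

/-- The ℂ-bilinear extension of the Lie bracket to the complexification
`𝔤 ⊗ ℂ`, modelled as pairs `(x₁, x₂) ↔ x₁ + i x₂`. -/
def cBracket {L : Type*} [LieRing L] [LieAlgebra ℝ L] (u v : L × L) : L × L :=
  (⁅u.1, v.1⁆ - ⁅u.2, v.2⁆, ⁅u.1, v.2⁆ + ⁅u.2, v.1⁆)

section AntiBiInvariant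

variable {R L : Type*} [Semiring R] [LieRing L] [Module R L] {J : L →ₗ[R] L}

theorem lie_apply_right_of_lie_apply_left (hanti : ∀ x y : L, ⁅J x, y⁆ = -J ⁅x, y⁆) (x y : L) :
    ⁅x, J y⁆ = -J ⁅x, y⁆ := by
  rw [← lie_skew, hanti, ← lie_skew x y, map_neg]

end AntiBiInvariant

section ComplexBracket

variable {L : Type*} [LieRing L] [LieAlgebra ℝ L] {J : L →ₗ[ℝ] L}

theorem cBracket_holomorphic (hJ : ∀ x, J (J x) = -x)
    (hanti : ∀ x y : L, ⁅J x, y⁆ = -J ⁅x, y⁆) (x y : L) :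
    cBracket (x, -J x) (y, -J y) = (2 • ⁅x, y⁆, 2 • J ⁅x, y⁆) := by
  simp only [cBracket, neg_lie, lie_neg, neg_neg, hJ,
    lie_apply_right_of_lie_apply_left hanti, hanti, sub_neg_eq_add, two_smul]

theorem cBracket_antiholomorphic (hJ : ∀ x, J (J x) = -x)
    (hanti : ∀ x y : L, ⁅J x, y⁆ = -J ⁅x, y⁆) (x y : L) :
    cBracket (x, J x) (y, J y) = (2 • ⁅x, y⁆, -(2 • J ⁅x, y⁆)) := by
  simp only [cBracket, hJ, lie_apply_right_of_lie_apply_left hanti, hanti, map_neg, neg_neg,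
    sub_neg_eq_add, two_smul, neg_add]

theorem cBracket_holomorphic_antiholomorphic (hJ : ∀ x, J (J x) = -x)
    (hanti : ∀ x y : L, ⁅J x, y⁆ = -J ⁅x, y⁆) (x y : L) :
    cBracket (x, -J x) (y, J y) = 0 := by
  simp only [cBracket, neg_lie, hJ, lie_apply_right_of_lie_apply_left hanti,
    hanti, neg_neg, sub_self, neg_add_cancel, Prod.mk_zero_zero]

end ComplexBracket

theorem antiBiInvariant_bracket_relations_general
    (L : Type*) [LieRing L] [LieAlgebra ℝ L]
    (J : L →ₗ[ℝ] L) (hJ : ∀ x, J (J x) = -x)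
    (hanti : ∀ x y : L, ⁅J x, y⁆ = -J ⁅x, y⁆) :
    (∀ x y : L, (cBracket (x, -J x) (y, -J y)).2 =
        J ((cBracket (x, -J x) (y, -J y)).1)) ∧
    (∀ x y : L, (cBracket (x, J x) (y, J y)).2 =
        -J ((cBracket (x, J x) (y, J y)).1)) ∧
    (∀ x y : L, cBracket (x, -J x) (y, J y) = 0) := by
  refine ⟨fun x y => ?_, fun x y => ?_, cBracket_holomorphic_antiholomorphic hJ hanti⟩
  · rw [cBracket_holomorphic hJ hanti, map_nsmul]
  · rw [cBracket_antiholomorphic hJ hanti, map_nsmul]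

/-- for an anti-bi-invariant almost complex structure `J` on a real
Lie algebra `𝔤`, with `𝔤^{1,0} = {X - iJX}` and `𝔤^{0,1} = {X + iJX}`, one has
`[𝔤^{1,0},𝔤^{1,0}] ⊆ 𝔤^{0,1}`, `[𝔤^{0,1},𝔤^{0,1}] ⊆ 𝔤^{1,0}` and
`[𝔤^{1,0},𝔤^{0,1}] = 0`. -/
theorem antiBiInvariant_bracket_relations
    (L : Type*) [LieRing L] [LieAlgebra ℝ L] [FiniteDimensional ℝ L]
    (J : L →ₗ[ℝ] L) (hJ : ∀ x, J (J x) = -x)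
    (hanti : ∀ x y : L, ⁅J x, y⁆ = -J ⁅x, y⁆) :
    (∀ x y : L, (cBracket (x, -J x) (y, -J y)).2 =
        J ((cBracket (x, -J x) (y, -J y)).1)) ∧
    (∀ x y : L, (cBracket (x, J x) (y, J y)).2 =
        -J ((cBracket (x, J x) (y, J y)).1)) ∧
    (∀ x y : L, cBracket (x, -J x) (y, J y) = 0) :=
  antiBiInvariant_bracket_relations_general L J hJ hanti
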